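/- The Jacobian of the Prony map factorizes as J_P(x) = U(ξ_1, l_1+1, …, ξ_n, l_n+1) · diag(D_1,…,D_n), where U(ξ_1, l_1+1, …, ξ_n, l_n+1) is the R×R confluent Vandermonde matrix with multiplicities increased by one, and D_i is the (l_i+1)×(l_i+1) complex matrix equal to the identity except for its last column, which equals (0, a_{i,0}, a_{i,1},…,a_{i,l_i−1})^T. -/

import Mathlib

open scoped BigOperators

noncomputable section

/-- Offset of the `i`-th block of columns: the sum of the multiplicities of all previous blocks. -/
def blockOff {n : ℕ} (L : Fin n → ℕ) (i : Fin n) : ℕ := ∑ i' ∈ Finset.Iio i, L i'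

theorem blockOff_add_lt {n : ℕ} (L : Fin n → ℕ) (i : Fin n) {j : ℕ} (hj : j < L i) :
    blockOff L i + j < ∑ i', L i' := by
  have h1 : ∑ i' ∈ insert i (Finset.Iio i), L i' = ∑ i' ∈ Finset.Iio i, L i' + L i := by
    rw [Finset.sum_insert (by simp)]; ring
  have h2 : ∑ i' ∈ insert i (Finset.Iio i), L i' ≤ ∑ i', L i' :=
    Finset.sum_le_sum_of_subset (Finset.subset_univ _)
  unfold blockOff
  omega

/-- The flattened index of position `j` inside block `i`, when block `i` has size `L i`. -/
def encC {n : ℕ} (L : Fin n → ℕ) (i : Fin n) (j : Fin (L i)) : Fin (∑ i', L i') :=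
  ⟨blockOff L i + j, blockOff_add_lt L i j.isLt⟩

/-- The (square) confluent Vandermonde matrix on nodes `ξ_i` with multiplicities `L i`:
rows are indexed by `k = 0,…,(∑ L i)−1`; the entry in row `k` and column `j` of block `i`
is `(k)_j ξ_i^{k−j}` (zero when `j > k`). -/
def confVand {n : ℕ} (L : Fin n → ℕ) (ξ : Fin n → ℂ) :
    Matrix (Fin (∑ i, L i)) (Fin (∑ i, L i)) ℂ :=
  fun k c => ∑ i, ∑ j : Fin (L i),
    if c = encC L i j then ((k : ℕ).descFactorial j : ℂ) * ξ i ^ ((k : ℕ) - (j : ℕ)) else 0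

/-- The index (in the parameter vector) of the magnitude `a_{i,j}` (`j < l i`) or,
for `j = l i`, of the node `ξ_i`; the parameters are ordered
`(a_{1,0},…,a_{1,l_1−1}, ξ_1, …, a_{n,0},…,a_{n,l_n−1}, ξ_n)`. -/
def encP {n : ℕ} (l : Fin n → ℕ) (i : Fin n) (j : Fin (l i + 1)) :
    Fin (∑ i', (l i' + 1)) :=
  encC (fun i' => l i' + 1) i j

/-- The parameter vector `x = (a_{1,0},…,a_{1,l_1−1}, ξ_1, …, a_{n,0},…,a_{n,l_n−1}, ξ_n)`. -/
def pronyParam {n : ℕ} (l : Fin n → ℕ) (ξ : Fin n → ℂ)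
    (a : (i : Fin n) → Fin (l i) → ℂ) : Fin (∑ i', (l i' + 1)) → ℂ :=
  fun p => ∑ i, ∑ j : Fin (l i + 1),
    if p = encP l i j then (if h : (j : ℕ) < l i then a i ⟨j, h⟩ else ξ i) else 0

/-- The Prony map `P : ℂ^R → ℂ^R` sending the parameter vector
`x = (a_{1,0},…,a_{1,l_1−1}, ξ_1, …, a_{n,0},…,a_{n,l_n−1}, ξ_n)` to the moment vector
`(m_0,…,m_{R−1})`, `m_k = Σ_i Σ_{j<l_i} a_{i,j} (k)_j ξ_i^{k−j}`. -/
def pronyMap {n : ℕ} (l : Fin n → ℕ) (x : Fin (∑ i', (l i' + 1)) → ℂ) :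
    Fin (∑ i', (l i' + 1)) → ℂ :=
  fun k => ∑ i, ∑ j : Fin (l i),
    x (encP l i (Fin.castSucc j)) * ((k : ℕ).descFactorial j : ℂ) *
      (x (encP l i (Fin.last (l i)))) ^ ((k : ℕ) - (j : ℕ))

/-- The Jacobian matrix of the Prony map at `x`: the `(k,p)` entry is the partial
derivative of the `k`-th moment with respect to the `p`-th parameter. -/
def pronyJacobian {n : ℕ} (l : Fin n → ℕ) (x : Fin (∑ i', (l i' + 1)) → ℂ) :
    Matrix (Fin (∑ i', (l i' + 1))) (Fin (∑ i', (l i' + 1))) ℂ :=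
  fun k p => deriv (fun t : ℂ => pronyMap l (Function.update x p t) k) (x p)

/-- The block-diagonal matrix `diag(D_1,…,D_n)`, where `D_i` is the `(l_i+1)×(l_i+1)`
identity matrix except for its last column, which is `(0, a_{i,0}, …, a_{i,l_i−1})ᵀ`. -/
def diagD {n : ℕ} (l : Fin n → ℕ) (a : (i : Fin n) → Fin (l i) → ℂ) :
    Matrix (Fin (∑ i', (l i' + 1))) (Fin (∑ i', (l i' + 1))) ℂ :=
  fun r c => ∑ i, ∑ s : Fin (l i + 1), ∑ t : Fin (l i + 1),
    if r = encP l i s ∧ c = encP l i t then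
      (if (t : ℕ) = l i then
        (if hs : (s : ℕ) = 0 then 0 else a i ⟨(s : ℕ) - 1, by have := s.isLt; omega⟩)
      else if (s : ℕ) = (t : ℕ) then 1 else 0)
    else 0

/-!
Every moment is a sum of terms `a_{i,j} (k)_j ξ_i^{k-j}`, linear in `a_{i,j}` and polynomial in
`ξ_i`. So the column of `J_P` belonging to `a_{i,j}` is column `j` of block `i` of the confluent
Vandermonde matrix `U` (with multiplicities `l_i + 1`), while the column belonging to `ξ_i` is
`Σ_j a_{i,j} (k - j) (k)_j ξ_i^{k-j-1} = Σ_j a_{i,j} (k)_{j+1} ξ_i^{k-(j+1)}`, the combination of the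
columns `1, …, l_i` of that block with coefficients `a_{i,j}`. Right multiplication by the block
diagonal matrix `diag(D_1, …, D_n)` forms exactly these columns.
-/

open Finset Matrix

section BlockIndex

variable {n : ℕ} (L : Fin n → ℕ)

theorem encC_eq_finSigmaFinEquiv (i : Fin n) (j : Fin (L i)) :
    encC L i j = finSigmaFinEquiv ⟨i, j⟩ := by
  have hIio : (univ : Finset (Fin i)).map (Fin.castLEEmb i.2.le) = Iio i := by
    ext c
    simp only [mem_map, mem_univ, true_and, mem_Iio, Fin.coe_castLEEmb]
    exact ⟨fun ⟨d, hd⟩ => hd ▸ d.2, fun h => ⟨⟨c, h⟩, rfl⟩⟩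
  ext
  simp [encC, blockOff, ← hIio]

theorem encC_eq_encC_iff {i i' : Fin n} {j : Fin (L i)} {j' : Fin (L i')} :
    encC L i j = encC L i' j' ↔ i = i' ∧ (j : ℕ) = j' := by
  rw [encC_eq_finSigmaFinEquiv, encC_eq_finSigmaFinEquiv, finSigmaFinEquiv.apply_eq_iff_eq,
    Sigma.mk.inj_iff]
  constructor
  · rintro ⟨rfl, h⟩
    exact ⟨rfl, by rw [eq_of_heq h]⟩
  · rintro ⟨rfl, h⟩
    exact ⟨rfl, heq_of_eq (Fin.ext h)⟩

theorem exists_encC_eq (c : Fin (∑ i, L i)) : ∃ i j, encC L i j = c :=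
  ⟨_, _, (encC_eq_finSigmaFinEquiv L _ _).trans (finSigmaFinEquiv.apply_symm_apply c)⟩

theorem sum_sum_encC {M : Type*} [AddCommMonoid M] (g : Fin (∑ i, L i) → M) :
    ∑ i, ∑ j, g (encC L i j) = ∑ c, g c := by
  simp only [encC_eq_finSigmaFinEquiv]
  rw [← Fintype.sum_sigma fun q => g (finSigmaFinEquiv q), finSigmaFinEquiv.sum_comp]

theorem sum_sum_ite_eq {M : Type*} [AddCommMonoid M] (f : ∀ i, Fin (L i) → M)
    (i₀ : Fin n) (j₀ : Fin (L i₀)) :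
    ∑ i, ∑ j : Fin (L i), (if i₀ = i ∧ (j₀ : ℕ) = j then f i j else 0) = f i₀ j₀ := by
  rw [Fintype.sum_eq_single i₀ fun i hi => sum_eq_zero fun j _ => if_neg fun h => hi h.1.symm]
  simp [Fin.val_inj]

end BlockIndex

theorem confVand_encC {n : ℕ} (L : Fin n → ℕ) (ξ : Fin n → ℂ) (k : Fin (∑ i, L i))
    (i : Fin n) (j : Fin (L i)) :
    confVand L ξ k (encC L i j) = ((k : ℕ).descFactorial j : ℂ) * ξ i ^ ((k : ℕ) - j) := by
  simp only [confVand, encC_eq_encC_iff]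
  exact sum_sum_ite_eq L (fun i j => ((k : ℕ).descFactorial j : ℂ) * ξ i ^ ((k : ℕ) - j)) i j

theorem hasDerivAt_update_apply {ι 𝕜 : Type*} [DecidableEq ι]
    [NontriviallyNormedField 𝕜] (x : ι → 𝕜) (p q : ι) (y : 𝕜) :
    HasDerivAt (fun t => Function.update x p t q) (if p = q then 1 else 0) y := by
  simpa [Pi.single_apply, eq_comm] using hasDerivAt_pi.1 (hasDerivAt_update x p y) q

section DiagBlock

variable {R : Type*} [Semiring R] {m : ℕ}

def diagDBlock (v : Fin m → R) : Matrix (Fin (m + 1)) (Fin (m + 1)) R :=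
  (1 : Matrix (Fin (m + 1)) (Fin (m + 1)) R).updateCol (Fin.last m) (Fin.cons 0 v)

theorem diagDBlock_apply (v : Fin m → R) (s t : Fin (m + 1)) :
    diagDBlock v s t =
      if (t : ℕ) = m then (if hs : (s : ℕ) = 0 then 0 else v ⟨s - 1, by omega⟩)
      else if (s : ℕ) = t then 1 else 0 := by
  rw [diagDBlock, updateCol_apply, one_apply]
  simp only [Fin.ext_iff, Fin.val_last]
  obtain rfl | ⟨s, rfl⟩ := Fin.eq_zero_or_eq_succ s <;> simp

theorem vecMul_diagDBlock (u : Fin (m + 1) → R) (v : Fin m → R) :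
    u ᵥ* diagDBlock v = Function.update u (Fin.last m) (∑ j, u j.succ * v j) := by
  rw [diagDBlock, vecMul_updateCol, vecMul_one, dotProduct, Fin.sum_univ_succ]
  simp

end DiagBlock

section Prony

variable {n : ℕ} (l : Fin n → ℕ) (ξ : Fin n → ℂ) (a : (i : Fin n) → Fin (l i) → ℂ)

theorem exists_encP_eq (p : Fin (∑ i, (l i + 1))) : ∃ i t, encP l i t = p :=
  exists_encC_eq _ p

theorem encP_eq_encP_iff {i i' : Fin n} {t : Fin (l i + 1)} {t' : Fin (l i' + 1)} :
    encP l i t = encP l i' t' ↔ i = i' ∧ (t : ℕ) = t' :=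
  encC_eq_encC_iff _

theorem sum_sum_encP {M : Type*} [AddCommMonoid M] (g : Fin (∑ i, (l i + 1)) → M) :
    ∑ i, ∑ t, g (encP l i t) = ∑ p, g p :=
  sum_sum_encC _ g

theorem pronyParam_encP (i : Fin n) (t : Fin (l i + 1)) :
    pronyParam l ξ a (encP l i t) = if h : (t : ℕ) < l i then a i ⟨t, h⟩ else ξ i := by
  simp only [pronyParam, encP_eq_encP_iff]
  exact sum_sum_ite_eq _ (fun i (t : Fin (l i + 1)) =>
    if h : (t : ℕ) < l i then a i ⟨t, h⟩ else ξ i) i t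

theorem pronyParam_encP_castSucc (i : Fin n) (j : Fin (l i)) :
    pronyParam l ξ a (encP l i j.castSucc) = a i j := by
  simp [pronyParam_encP]

theorem pronyParam_encP_last (i : Fin n) :
    pronyParam l ξ a (encP l i (Fin.last (l i))) = ξ i := by
  simp [pronyParam_encP]

theorem encP_castSucc_ne_encP_last (i i' : Fin n) (j : Fin (l i)) :
    encP l i j.castSucc ≠ encP l i' (Fin.last (l i')) := by
  rw [Ne, encP_eq_encP_iff]
  rintro ⟨rfl, h⟩
  exact j.is_lt.ne h

theorem diagD_encP_left (i : Fin n) (s : Fin (l i + 1)) (p : Fin (∑ i, (l i + 1))) :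
    diagD l a (encP l i s) p = ∑ t, if p = encP l i t then diagDBlock (a i) s t else 0 := by
  simp only [diagD]
  rw [← sum_sum_ite_eq _ (fun i s => ∑ t, if p = encP l i t then diagDBlock (a i) s t else 0) i s]
  refine Fintype.sum_congr _ _ fun i' => Fintype.sum_congr _ _ fun s' => ?_
  simp only [diagDBlock_apply, ite_and, encP_eq_encP_iff]
  split_ifs <;> simp

theorem mul_diagD_encP (U : Matrix (Fin (∑ i, (l i + 1))) (Fin (∑ i, (l i + 1))) ℂ)
    (k : Fin (∑ i, (l i + 1))) (i : Fin n) (t : Fin (l i + 1)) :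
    (U * diagD l a) k (encP l i t) = ((fun s => U k (encP l i s)) ᵥ* diagDBlock (a i)) t := by
  rw [mul_apply, ← sum_sum_encP, vecMul, dotProduct]
  simp only [diagD_encP_left, mul_sum, mul_ite, mul_zero]
  rw [← sum_sum_ite_eq _ (fun i' t' => ∑ s, U k (encP l i' s) * diagDBlock (a i') s t') i t]
  refine Fintype.sum_congr _ _ fun i' => ?_
  rw [sum_comm]
  refine Fintype.sum_congr _ _ fun t' => ?_
  simp only [encP_eq_encP_iff]
  split_ifs <;> simp

theorem pronyJacobian_apply (x : Fin (∑ i, (l i + 1)) → ℂ) (k p : Fin (∑ i, (l i + 1))) :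
    pronyJacobian l x k p = ∑ i, ∑ j : Fin (l i),
      ((if p = encP l i j.castSucc then 1 else 0) * ((k : ℕ).descFactorial j : ℂ) *
          x (encP l i (Fin.last (l i))) ^ ((k : ℕ) - j) +
        x (encP l i j.castSucc) * ((k : ℕ).descFactorial j : ℂ) *
          (((k : ℕ) - j : ℕ) * x (encP l i (Fin.last (l i))) ^ ((k : ℕ) - j - 1) *
            (if p = encP l i (Fin.last (l i)) then 1 else 0))) := by
  refine HasDerivAt.deriv ?_
  unfold pronyMap
  refine HasDerivAt.fun_sum fun i _ => HasDerivAt.fun_sum fun j _ => ?_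
  have h := ((hasDerivAt_update_apply x p (encP l i j.castSucc) (x p)).mul_const
    ((k : ℕ).descFactorial j : ℂ)).fun_mul
    ((hasDerivAt_update_apply x p (encP l i (Fin.last (l i))) (x p)).pow ((k : ℕ) - j))
  simpa only [Function.update_eq_self, Pi.pow_apply] using h

theorem pronyJacobian_pronyParam_encP_castSucc (k : Fin (∑ i, (l i + 1))) (i : Fin n)
    (j : Fin (l i)) :
    pronyJacobian l (pronyParam l ξ a) k (encP l i j.castSucc) =
      ((k : ℕ).descFactorial j : ℂ) * ξ i ^ ((k : ℕ) - j) := by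
  rw [pronyJacobian_apply]
  simp only [pronyParam_encP_castSucc, pronyParam_encP_last, encP_castSucc_ne_encP_last,
    if_false, mul_zero, add_zero, ite_mul, one_mul, zero_mul]
  simp only [encP_eq_encP_iff, Fin.val_castSucc]
  exact sum_sum_ite_eq l (fun i j => ((k : ℕ).descFactorial j : ℂ) * ξ i ^ ((k : ℕ) - j)) i j

theorem pronyJacobian_pronyParam_encP_last (k : Fin (∑ i, (l i + 1))) (i : Fin n) :
    pronyJacobian l (pronyParam l ξ a) k (encP l i (Fin.last (l i))) =
      ∑ j : Fin (l i), ((k : ℕ).descFactorial (j + 1) : ℂ) * ξ i ^ ((k : ℕ) - (j + 1)) * a i j := by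
  rw [pronyJacobian_apply]
  simp only [pronyParam_encP_castSucc, pronyParam_encP_last,
    (encP_castSucc_ne_encP_last _ _ _ _).symm, if_false, zero_mul, zero_add]
  rw [Fintype.sum_eq_single i fun i' hi => sum_eq_zero fun j _ => by
    rw [if_neg fun h => hi (encP_eq_encP_iff l |>.1 h).1.symm, mul_zero, mul_zero]]
  refine Fintype.sum_congr _ _ fun j => ?_
  rw [if_pos rfl, Nat.descFactorial_succ, Nat.sub_sub]
  push_cast
  ring

end Prony

theorem pronyJacobian_factorization_general
    (n : ℕ) (l : Fin n → ℕ)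
    (ξ : Fin n → ℂ) (a : (i : Fin n) → Fin (l i) → ℂ) :
    pronyJacobian l (pronyParam l ξ a) =
      confVand (fun i => l i + 1) ξ * diagD l a := by
  ext k p
  obtain ⟨i, t, rfl⟩ := exists_encP_eq l p
  rw [mul_diagD_encP, vecMul_diagDBlock]
  induction t using Fin.lastCases with
  | last =>
    rw [Function.update_self, pronyJacobian_pronyParam_encP_last]
    simp only [encP, confVand_encC, Fin.val_succ]
  | cast j =>
    rw [Function.update_of_ne (Fin.castSucc_ne_last j), pronyJacobian_pronyParam_encP_castSucc]
    exact (confVand_encC _ ξ k i j.castSucc).symm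

/-- the Jacobian of the Prony map factorizes as
`J_P(x) = U(ξ_1,l_1+1,…,ξ_n,l_n+1) · diag(D_1,…,D_n)`. -/
theorem pronyJacobian_factorization
    (n : ℕ) (hn : 1 ≤ n) (l : Fin n → ℕ) (hl : ∀ i, 1 ≤ l i)
    (ξ : Fin n → ℂ) (a : (i : Fin n) → Fin (l i) → ℂ) :
    pronyJacobian l (pronyParam l ξ a) =
      confVand (fun i => l i + 1) ξ * diagD l a :=
  pronyJacobian_factorization_general n l ξ a
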